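/- For every integer n ≥ 1, the coverage probability with n-layer SIC capability — the probability that there exist integers l and k with 0 ≤ l ≤ n−1, k ≥ 1 and t_k = 1 such that ξ_i^{−1} > θ I_i for all 1 ≤ i ≤ l and ξ_k^{−1} > θ I_l^{!k} — is at least Σ_{k=1}^n (1−η)^{k−1} · η · p_k, and equality holds when θ ≥ 1. -/

import Mathlib

open MeasureTheory ProbabilityTheory Real
open Filter Topology

/-!
Let `D_m` be the event that SIC decodes the `m` strongest stations and `C_m` the event that `m`
is the first accessible index. The events `D_m ∩ C_m`, `1 ≤ m ≤ n`, are disjoint, each implies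
coverage (with `l = m - 1`, `k = m`), and `P(D_m ∩ C_m) = (1 - η)^(m-1) η p_m` because the marks
are independent of the path losses. Conversely, if `θ ≥ 1` and coverage happens through `(l, k)`,
then `k ≤ l + 1`, since otherwise `I_l^{!k}` contains the stronger signal `ξ_{l+1}⁻¹`; so the first
accessible index `m ≤ k` already lies in `D_m`. This uses `Σ ξ_j⁻¹ < ∞`, which holds almost surely
because `T_k / k → 1` by the strong law of large numbers and `1 / β > 1`.
-/

theorem tsum_subtype_eq_tsum_add {α : Type*} [AddCommMonoid α] [TopologicalSpace α]
    (f : ℕ → α) {P : ℕ → Prop} {m : ℕ} (hP : ∀ j, P j ↔ m ≤ j) :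
    ∑' j : {j // P j}, f j = ∑' j, f (m + j) :=
  let e : ℕ ≃ {j // P j} :=
    { toFun j := ⟨m + j, (hP _).2 (Nat.le_add_right m j)⟩
      invFun j := j.1 - m
      left_inv j := Nat.add_sub_cancel_left m j
      right_inv j := Subtype.ext (by have := (hP j).1 j.2; dsimp only; omega) }
  (e.tsum_eq fun j => f j).symm

namespace SIC

variable {θ : ℝ} {a τ : ℕ → ℝ} {l m n : ℕ}

/-- Successive interference cancellation decodes the `l` strongest signals: `a j` stands for
`ξ_j⁻¹`, and the sum is the residual interference `I_i`. -/
def Decodes (θ : ℝ) (a : ℕ → ℝ) (l : ℕ) : Prop :=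
  ∀ i, 1 ≤ i → i ≤ l → θ * ∑' j, a (i + 1 + j) < a i

def IsFirstMark (τ : ℕ → ℝ) (m : ℕ) : Prop :=
  ∀ i, 1 ≤ i → i ≤ m → τ i = if i = m then 1 else 0

def Covered (θ : ℝ) (a τ : ℕ → ℝ) (n : ℕ) : Prop :=
  ∃ l k : ℕ, l ≤ n - 1 ∧ 1 ≤ k ∧ τ k = 1 ∧ Decodes θ a l ∧
    θ * ∑' j : {j : ℕ // l + 1 ≤ j ∧ j ≠ k}, a j < a k

theorem Decodes.mono {l' : ℕ} (h : Decodes θ a l') (hl : l ≤ l') : Decodes θ a l :=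
  fun i hi hil => h i hi (hil.trans hl)

theorem decodes_succ_iff :
    Decodes θ a (l + 1) ↔
      Decodes θ a l ∧ θ * ∑' j : {j : ℕ // l + 1 ≤ j ∧ j ≠ l + 1}, a j < a (l + 1) := by
  rw [tsum_subtype_eq_tsum_add a (m := l + 1 + 1) fun j => by omega]
  refine ⟨fun h => ⟨h.mono l.le_succ, h (l + 1) l.succ_pos le_rfl⟩, ?_⟩
  rintro ⟨h, hlast⟩ i hi hil
  rcases hil.lt_or_eq with hlt | rfl
  · exact h i hi (Nat.lt_succ_iff.1 hlt)
  · exact hlast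

theorem IsFirstMark.eq {m' : ℕ} (h : IsFirstMark τ m) (h' : IsFirstMark τ m') (hm : 1 ≤ m)
    (hm' : 1 ≤ m') : m = m' := by
  wlog hle : m ≤ m' generalizing m m'
  · exact (this h' h hm' hm (le_of_not_ge hle)).symm
  by_contra hne
  have h1 : τ m = 1 := by simpa using h m hm le_rfl
  have h0 : τ m = 0 := by simpa [hne] using h' m hm hle
  exact one_ne_zero (h1.symm.trans h0)

theorem isFirstMark_find [DecidablePred fun m => 1 ≤ m ∧ τ m = 1]
    (hτ : ∀ k, τ k = 0 ∨ τ k = 1) (h : ∃ m, 1 ≤ m ∧ τ m = 1) : IsFirstMark τ (Nat.find h) := by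
  intro i hi him
  split_ifs with heq
  · exact heq ▸ (Nat.find_spec h).2
  · have hmin := Nat.find_min h (lt_of_le_of_ne him heq)
    exact (hτ i).resolve_right fun h1 => hmin ⟨hi, h1⟩

theorem covered_of_isFirstMark (hm : 1 ≤ m) (hmn : m ≤ n) (hD : Decodes θ a m)
    (hτ : IsFirstMark τ m) : Covered θ a τ n := by
  obtain ⟨l, rfl⟩ : ∃ l, m = l + 1 := ⟨m - 1, by omega⟩
  obtain ⟨hl, hlast⟩ := decodes_succ_iff.1 hD
  exact ⟨l, l + 1, by omega, by omega, by simpa using hτ (l + 1) hm le_rfl, hl, hlast⟩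

/-- Otherwise the stronger signal `a (l + 1)` is part of the interference. -/
theorem le_succ_of_mul_tsum_lt {k : ℕ} (hθ : 1 ≤ θ) (hsum : Summable a) (ha : 0 ≤ a)
    (hanti : AntitoneOn a (Set.Ici 1))
    (h : θ * ∑' j : {j : ℕ // l + 1 ≤ j ∧ j ≠ k}, a j < a k) : k ≤ l + 1 := by
  by_contra! hk
  have hJ : a (l + 1) ≤ ∑' j : {j : ℕ // l + 1 ≤ j ∧ j ≠ k}, a j :=
    (hsum.subtype {j | l + 1 ≤ j ∧ j ≠ k}).le_tsum ⟨l + 1, le_rfl, hk.ne⟩ fun j _ => ha j.1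
  have hθJ := le_mul_of_one_le_left ((ha (l + 1)).trans hJ) hθ
  have hmono : a k ≤ a (l + 1) := hanti (by simp) (Set.mem_Ici.2 (by omega)) hk.le
  linarith

theorem exists_isFirstMark_of_covered (hn : 1 ≤ n) (hθ : 1 ≤ θ) (hsum : Summable a) (ha : 0 ≤ a)
    (hanti : AntitoneOn a (Set.Ici 1)) (hτ : ∀ k, τ k = 0 ∨ τ k = 1) (h : Covered θ a τ n) :
    ∃ m, 1 ≤ m ∧ m ≤ n ∧ Decodes θ a m ∧ IsFirstMark τ m := by
  classical
  obtain ⟨l, k, hln, hk, hτk, hD, hJ⟩ := h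
  have hkl := le_succ_of_mul_tsum_lt hθ hsum ha hanti hJ
  have hex : ∃ m, 1 ≤ m ∧ τ m = 1 := ⟨k, hk, hτk⟩
  have hmk : Nat.find hex ≤ k := Nat.find_min' hex ⟨hk, hτk⟩
  refine ⟨Nat.find hex, (Nat.find_spec hex).1, by omega, ?_, isFirstMark_find hτ hex⟩
  rcases (hmk.trans hkl).lt_or_eq with hlt | heq
  · exact hD.mono (Nat.lt_succ_iff.1 hlt)
  · obtain rfl : k = l + 1 := by omega
    exact heq ▸ decodes_succ_iff.2 ⟨hD, hJ⟩

end SIC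

open SIC

theorem summable_inv_rpow_of_tendsto_div {T : ℕ → ℝ} {c r : ℝ} (hr : 1 < r) (hc : 0 < c)
    (hT : Tendsto (fun n : ℕ => T n / n) atTop (𝓝 c)) : Summable fun n => (T n ^ r)⁻¹ := by
  refine Summable.of_norm_bounded_eventually_nat
    ((Real.summable_nat_rpow_inv.2 hr).mul_left ((c / 2) ^ r)⁻¹) ?_
  filter_upwards [hT.eventually (lt_mem_nhds (half_lt_self hc)), eventually_ge_atTop 1]
    with n hn hn1
  have hn0 : (0 : ℝ) < n := by exact_mod_cast hn1
  have hlow : c / 2 * n < T n := (lt_div_iff₀ hn0).1 hn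
  have hpos : 0 < c / 2 * n := by positivity
  rw [norm_inv, Real.norm_of_nonneg (rpow_nonneg (hpos.trans hlow).le _), ← mul_inv,
    ← mul_rpow (by positivity) hn0.le]
  exact inv_anti₀ (rpow_pos_of_pos hpos _) (rpow_le_rpow hpos.le hlow.le (by linarith))

theorem antitoneOn_inv_rpow_sum_range {e : ℕ → ℝ} (he : ∀ i, 0 < e i) {r : ℝ} (hr : 0 < r) :
    AntitoneOn (fun k => ((∑ i ∈ Finset.range k, e i) ^ r)⁻¹) (Set.Ici 1) := by
  intro i hi j _ hij
  have hpos : 0 < ∑ k ∈ Finset.range i, e k :=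
    Finset.sum_pos (fun k _ => he k) (Finset.nonempty_range_iff.2 (Nat.one_le_iff_ne_zero.1 hi))
  exact inv_anti₀ (rpow_pos_of_pos hpos _) (rpow_le_rpow hpos.le
    (Finset.sum_le_sum_of_subset_of_nonneg (Finset.range_subset_range.2 hij)
      fun k _ _ => (he k).le) hr.le)

section ExponentialTail

variable {Ω : Type*} [MeasurableSpace Ω] {μ : Measure Ω} [IsProbabilityMeasure μ] {X : Ω → ℝ}

theorem ae_pos_of_tail (hX : Measurable X)
    (htail : ∀ x, 0 ≤ x → μ {ω | x < X ω} = ENNReal.ofReal (exp (-x))) :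
    ∀ᵐ ω ∂μ, 0 < X ω :=
  (prob_compl_eq_zero_iff (measurableSet_lt measurable_const hX)).2 (by simpa using htail 0 le_rfl)

theorem map_eq_expMeasure_one_of_tail (hX : Measurable X)
    (htail : ∀ x, 0 ≤ x → μ {ω | x < X ω} = ENNReal.ofReal (exp (-x))) :
    μ.map X = expMeasure 1 := by
  have := isProbabilityMeasure_expMeasure one_pos
  have := Measure.isProbabilityMeasure_map (μ := μ) hX.aemeasurable
  refine (Measure.cdf_eq_iff _ _).1 (StieltjesFunction.ext fun x => ?_)
  rw [cdf_expMeasure_eq one_pos, cdf_eq_real, map_measureReal_apply hX measurableSet_Iic]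
  split_ifs with hx
  · have hcompl : X ⁻¹' Set.Iic x = {ω | x < X ω}ᶜ := by ext; simp
    rw [hcompl, measureReal_compl (measurableSet_lt measurable_const hX), probReal_univ,
      measureReal_def, htail x hx, ENNReal.toReal_ofReal (exp_pos _).le, one_mul]
  · refine (measureReal_eq_zero_iff (measure_ne_top μ _)).2
      (measure_mono_null ?_ (ae_pos_of_tail hX htail))
    exact fun ω (hω : X ω ≤ x) hpos => hx (hpos.le.trans hω)

theorem lintegral_ofReal_eq_one_of_tail (hX : Measurable X)
    (htail : ∀ x, 0 ≤ x → μ {ω | x < X ω} = ENNReal.ofReal (exp (-x))) :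
    ∫⁻ ω, ENNReal.ofReal (X ω) ∂μ = 1 := by
  have hexp : IntegrableOn (fun x : ℝ => exp (-x)) (Set.Ioi 0) := by
    simpa using exp_neg_integrableOn_Ioi 0 one_pos
  rw [lintegral_eq_lintegral_meas_lt μ ((ae_pos_of_tail hX htail).mono fun _ h => h.le)
      hX.aemeasurable,
    setLIntegral_congr_fun measurableSet_Ioi fun x hx => htail x (le_of_lt hx),
    ← ofReal_integral_eq_lintegral_ofReal hexp (ae_of_all _ fun x => (exp_pos _).le),
    integral_exp_neg_Ioi_zero, ENNReal.ofReal_one]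

theorem integrable_of_tail (hX : Measurable X)
    (htail : ∀ x, 0 ≤ x → μ {ω | x < X ω} = ENNReal.ofReal (exp (-x))) : Integrable X μ := by
  refine ⟨hX.aestronglyMeasurable, ?_⟩
  rw [hasFiniteIntegral_iff_ofReal ((ae_pos_of_tail hX htail).mono fun _ h => h.le),
    lintegral_ofReal_eq_one_of_tail hX htail]
  exact ENNReal.one_lt_top

theorem integral_eq_one_of_tail (hX : Measurable X)
    (htail : ∀ x, 0 ≤ x → μ {ω | x < X ω} = ENNReal.ofReal (exp (-x))) : ∫ ω, X ω ∂μ = 1 := by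
  rw [integral_eq_lintegral_of_nonneg_ae ((ae_pos_of_tail hX htail).mono fun _ h => h.le)
    hX.aestronglyMeasurable, lintegral_ofReal_eq_one_of_tail hX htail, ENNReal.toReal_one]

theorem ae_tendsto_avg_of_tail {E : ℕ → Ω → ℝ} (hE : ∀ i, Measurable (E i))
    (hindep : Pairwise (Function.onFun (IndepFun · · μ) E))
    (htail : ∀ i x, 0 ≤ x → μ {ω | x < E i ω} = ENNReal.ofReal (exp (-x))) :
    ∀ᵐ ω ∂μ, Tendsto (fun n : ℕ => (∑ i ∈ Finset.range n, E i ω) / n) atTop (𝓝 1) := by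
  have hident (i : ℕ) : IdentDistrib (E i) (E 0) μ μ :=
    ⟨(hE i).aemeasurable, (hE 0).aemeasurable,
      (map_eq_expMeasure_one_of_tail (hE i) (htail i)).trans
        (map_eq_expMeasure_one_of_tail (hE 0) (htail 0)).symm⟩
  simpa only [integral_eq_one_of_tail (hE 0) (htail 0)] using
    strong_law_ae_real E (integrable_of_tail (hE 0) (htail 0)) hindep hident

end ExponentialTail

section Marks

variable {Ω : Type*}

theorem ProbabilityTheory.iIndepFun.indep_iSup_comap_sum_elim [MeasurableSpace Ω]
    {μ : Measure Ω} {ι κ β : Type*} [mβ : MeasurableSpace β] {f : ι → Ω → β} {g : κ → Ω → β}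
    (h : iIndepFun (Sum.elim f g) μ) (hf : ∀ i, Measurable (f i)) (hg : ∀ j, Measurable (g j)) :
    Indep (⨆ i, mβ.comap (f i)) (⨆ j, mβ.comap (g j)) μ := by
  have hle (x : ι ⊕ κ) : mβ.comap (Sum.elim f g x) ≤ ‹MeasurableSpace Ω› :=
    x.rec (fun i => (hf i).comap_le) fun j => (hg j).comap_le
  simpa only [iSup_range, Sum.elim_inl, Sum.elim_inr] using
    indep_iSup_of_disjoint hle h.iIndep Set.isCompl_range_inl_range_inr.disjoint

theorem measurableSet_isFirstMark {M : MeasurableSpace Ω} {t : ℕ → Ω → ℝ}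
    (ht : ∀ k, Measurable (t k)) (m : ℕ) : MeasurableSet {ω | IsFirstMark (t · ω) m} := by
  simp only [IsFirstMark, Set.ofPred_forall]
  exact .iInter fun i => .iInter fun _ => .iInter fun _ => ht i (measurableSet_singleton _)

theorem measurableSet_decodes {M : MeasurableSpace Ω} {a : ℕ → Ω → ℝ}
    (ha : ∀ j, Measurable (a j)) (θ : ℝ) (l : ℕ) : MeasurableSet {ω | Decodes θ (a · ω) l} := by
  simp only [Decodes, Set.ofPred_forall]
  exact .iInter fun i => .iInter fun _ => .iInter fun _ =>
    measurableSet_lt ((Measurable.tsum fun j => ha _).const_mul θ) (ha i)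

variable [MeasurableSpace Ω] {μ : Measure Ω} [IsProbabilityMeasure μ] {t : ℕ → Ω → ℝ} {η : ℝ}

theorem measureReal_isFirstMark (hη0 : 0 ≤ η) (hη1 : η ≤ 1) (ht : iIndepFun t μ)
    (htmeas : ∀ k, Measurable (t k)) (ht01 : ∀ k ω, t k ω = 0 ∨ t k ω = 1)
    (htdist : ∀ k, μ {ω | t k ω = 1} = ENNReal.ofReal η) (K : ℕ) :
    μ.real {ω | IsFirstMark (t · ω) (K + 1)} = (1 - η) ^ K * η := by
  have hone (k : ℕ) : μ (t k ⁻¹' {1}) = ENNReal.ofReal η := htdist k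
  have hzero (k : ℕ) : μ (t k ⁻¹' {0}) = ENNReal.ofReal (1 - η) := by
    have hcompl : t k ⁻¹' {0} = {ω | t k ω = 1}ᶜ := by
      ext ω; rcases ht01 k ω with h | h <;> simp [h]
    rw [hcompl, prob_compl_eq_one_sub (s := {ω | t k ω = 1}) (htmeas k (measurableSet_singleton 1)),
      htdist, ENNReal.ofReal_sub _ hη0, ENNReal.ofReal_one]
  have hset : {ω | IsFirstMark (t · ω) (K + 1)} =
      ⋂ i ∈ Finset.Icc 1 (K + 1), t i ⁻¹' {if i = K + 1 then 1 else 0} := by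
    ext ω; simp [IsFirstMark, and_imp]
  have hprefix : ∏ i ∈ Finset.Icc 1 K, μ (t i ⁻¹' {if i = K + 1 then 1 else 0}) =
      ENNReal.ofReal (1 - η) ^ K := by
    rw [Finset.prod_congr rfl fun i hi => by
        rw [if_neg (by have := (Finset.mem_Icc.1 hi).2; omega), hzero],
      Finset.prod_const, Nat.card_Icc, Nat.add_sub_cancel]
  rw [measureReal_def, hset,
    ht.measure_inter_preimage_eq_mul _ fun _ _ => measurableSet_singleton _,
    Finset.prod_Icc_succ_top (by omega), hprefix, if_pos rfl, hone,
    ENNReal.toReal_mul, ENNReal.toReal_pow, ENNReal.toReal_ofReal (sub_nonneg.2 hη1),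
    ENNReal.toReal_ofReal hη0]

/-- The index of the first mark `1` is geometric and independent of the events `D m`. -/
theorem measureReal_biUnion_inter_isFirstMark {E : ℕ → Ω → ℝ} (hη0 : 0 ≤ η) (hη1 : η ≤ 1)
    (hindep : iIndepFun (Sum.elim E t) μ) (hEmeas : ∀ i, Measurable (E i))
    (htmeas : ∀ k, Measurable (t k)) (ht01 : ∀ k ω, t k ω = 0 ∨ t k ω = 1)
    (htdist : ∀ k, μ {ω | t k ω = 1} = ENNReal.ofReal η) {D : ℕ → Set Ω}
    (hD : ∀ m, MeasurableSet[⨆ i, MeasurableSpace.comap (E i) inferInstance] (D m)) (n : ℕ) :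
    μ.real (⋃ k ∈ Finset.range n, D (k + 1) ∩ {ω | IsFirstMark (t · ω) (k + 1)}) =
      ∑ k ∈ Finset.range n, (1 - η) ^ k * η * μ.real (D (k + 1)) := by
  have hC (m : ℕ) : MeasurableSet[⨆ j, MeasurableSpace.comap (t j) inferInstance]
      {ω | IsFirstMark (t · ω) m} :=
    measurableSet_isFirstMark (fun j => measurable_iff_comap_le.2 (le_iSup_of_le j le_rfl)) m
  have hEt := hindep.indep_iSup_comap_sum_elim hEmeas htmeas
  have ht : iIndepFun t μ := hindep.precomp (g := Sum.inr) Sum.inr_injective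
  rw [measureReal_biUnion_finset]
  · refine Finset.sum_congr rfl fun k _ => ?_
    rw [measureReal_def, (hEt.indepSet_of_measurableSet (hD _) (hC _)).measure_inter_eq_mul,
      ENNReal.toReal_mul, ← measureReal_def, ← measureReal_def,
      measureReal_isFirstMark hη0 hη1 ht htmeas ht01 htdist k]
    ring
  · intro j _ k _ hjk
    refine Set.disjoint_left.2 fun ω hj hk => hjk ?_
    exact Nat.succ_injective (hj.2.eq hk.2 j.succ_pos k.succ_pos)
  · exact fun k _ => (iSup_le (fun i => (hEmeas i).comap_le) _ (hD _)).inter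
      (iSup_le (fun j => (htmeas j).comap_le) _ (hC _))

end Marks

section PathLoss

variable {Ω : Type*} {β : ℝ} {E ξ : ℕ → Ω → ℝ}

theorem measurable_pathLoss {M : MeasurableSpace Ω}
    (hξ : ∀ k ω, ξ k ω = (∑ i ∈ Finset.range k, E i ω) ^ (1 / β : ℝ))
    (hE : ∀ i, Measurable (E i)) (k : ℕ) : Measurable (ξ k) := by
  rw [show ξ k = _ from funext (hξ k)]
  exact (Finset.measurable_sum _ fun i _ => hE i).pow_const _

theorem ae_summable_inv_pathLoss [MeasurableSpace Ω] {μ : Measure Ω} [IsProbabilityMeasure μ]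
    (hβ : β ∈ Set.Ioo (0 : ℝ) 1)
    (hξ : ∀ k ω, ξ k ω = (∑ i ∈ Finset.range k, E i ω) ^ (1 / β : ℝ))
    (hE : ∀ i, Measurable (E i)) (hindep : Pairwise (Function.onFun (IndepFun · · μ) E))
    (htail : ∀ i x, 0 ≤ x → μ {ω | x < E i ω} = ENNReal.ofReal (exp (-x))) :
    ∀ᵐ ω ∂μ, Summable (fun j => (ξ j ω)⁻¹) ∧ 0 ≤ (fun j => (ξ j ω)⁻¹) ∧
      AntitoneOn (fun j => (ξ j ω)⁻¹) (Set.Ici 1) := by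
  obtain rfl : ξ = _ := funext₂ hξ
  filter_upwards [ae_all_iff.2 fun i => ae_pos_of_tail (hE i) (htail i),
    ae_tendsto_avg_of_tail hE hindep htail] with ω hpos hlim
  exact ⟨summable_inv_rpow_of_tendsto_div (one_lt_one_div hβ.1 hβ.2) one_pos hlim,
    fun k => inv_nonneg.2 (rpow_nonneg (Finset.sum_nonneg fun i _ => (hpos i).le) _),
    antitoneOn_inv_rpow_sum_range hpos (one_div_pos.2 hβ.1)⟩

end PathLoss

theorem sic_hcn_coverage_finite_general
    {Ω : Type*} [MeasureSpace Ω] [IsProbabilityMeasure (ℙ : Measure Ω)]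
    (β θ η : ℝ) (hβ : β ∈ Set.Ioo (0:ℝ) 1) (hη : η ∈ Set.Ioc (0:ℝ) 1)
    (E : ℕ → Ω → ℝ) (hEmeas : ∀ i, Measurable (E i))
    -- Bernoulli marks: t k = 1 iff the k-th strongest BS is accessible
    (t : ℕ → Ω → ℝ) (htmeas : ∀ k, Measurable (t k))
    (ht01 : ∀ k ω, t k ω = 0 ∨ t k ω = 1)
    (htdist : ∀ k, ℙ {ω | t k ω = 1} = ENNReal.ofReal η)
    -- the E's and t's are jointly independent
    (hindep : iIndepFun (Sum.elim E t) ℙ)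
    (hEdist : ∀ i, ∀ x : ℝ, 0 ≤ x → ℙ {ω | x < E i ω} = ENNReal.ofReal (Real.exp (-x)))
    (ξ : ℕ → Ω → ℝ)
    (hξ : ∀ k ω, ξ k ω = (∑ i ∈ Finset.range k, E i ω) ^ (1/β : ℝ))
    (I : ℕ → Ω → ℝ) (hI : ∀ k ω, I k ω = ∑' j : ℕ, (ξ (k + 1 + j) ω)⁻¹)
    -- I_l^{!k} = Σ_{j ≥ l+1, j ≠ k} ξ_j⁻¹
    (J : ℕ → ℕ → Ω → ℝ)
    (hJ : ∀ l k ω, J l k ω = ∑' j : {j : ℕ // l + 1 ≤ j ∧ j ≠ k}, (ξ j ω)⁻¹)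
    (p : ℕ → ℝ)
    (hp : ∀ k, p k = (ℙ {ω | ∀ i, 1 ≤ i → i ≤ k → θ * I i ω < (ξ i ω)⁻¹}).toReal)
    (n : ℕ) (hn : 1 ≤ n) :
    ∑ k ∈ Finset.range n, (1 - η) ^ (k : ℕ) * η * p (k + 1)
      ≤ (ℙ {ω | ∃ l k : ℕ, l ≤ n - 1 ∧ 1 ≤ k ∧ t k ω = 1
          ∧ (∀ i, 1 ≤ i → i ≤ l → θ * I i ω < (ξ i ω)⁻¹)
          ∧ θ * J l k ω < (ξ k ω)⁻¹}).toReal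
    ∧ (1 ≤ θ →
      (ℙ {ω | ∃ l k : ℕ, l ≤ n - 1 ∧ 1 ≤ k ∧ t k ω = 1
          ∧ (∀ i, 1 ≤ i → i ≤ l → θ * I i ω < (ξ i ω)⁻¹)
          ∧ θ * J l k ω < (ξ k ω)⁻¹}).toReal
        = ∑ k ∈ Finset.range n, (1 - η) ^ (k : ℕ) * η * p (k + 1)) := by
  obtain rfl := funext₂ hI
  obtain rfl := funext₃ hJ
  obtain rfl := funext hp
  set U := ⋃ k ∈ Finset.range n,
    {ω | Decodes θ (fun j => (ξ j ω)⁻¹) (k + 1)} ∩ {ω | IsFirstMark (t · ω) (k + 1)}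
  have hPU : Measure.real ℙ U = ∑ k ∈ Finset.range n,
      (1 - η) ^ k * η * Measure.real ℙ {ω | Decodes θ (fun j => (ξ j ω)⁻¹) (k + 1)} :=
    measureReal_biUnion_inter_isFirstMark hη.1.le hη.2 hindep hEmeas htmeas ht01 htdist
      (measurableSet_decodes (fun j => (measurable_pathLoss hξ
        (fun i => measurable_iff_comap_le.2 (le_iSup_of_le i le_rfl)) j).inv) θ) n
  have hUA : U ⊆ {ω | Covered θ (fun j => (ξ j ω)⁻¹) (t · ω) n} := by
    simp only [U, Set.iUnion_subset_iff]
    rintro k hk ω ⟨hD, hτ⟩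
    exact covered_of_isFirstMark k.succ_pos (Finset.mem_range.1 hk) hD hτ
  have hAU (hθ : 1 ≤ θ) : {ω | Covered θ (fun j => (ξ j ω)⁻¹) (t · ω) n} ≤ᵐ[ℙ] U := by
    filter_upwards [ae_summable_inv_pathLoss hβ hξ hEmeas
      (fun i j hij => hindep.indepFun (Sum.inl_injective.ne hij)) hEdist]
      with ω ⟨hsum, hnonneg, hanti⟩ hA
    obtain ⟨m, hm, hmn, hD, hτ⟩ :=
      exists_isFirstMark_of_covered hn hθ hsum hnonneg hanti (ht01 · ω) hA
    obtain ⟨k, rfl⟩ : ∃ k, m = k + 1 := ⟨m - 1, by omega⟩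
    exact Set.mem_biUnion (Finset.mem_range.2 (by omega)) ⟨hD, hτ⟩
  refine ⟨hPU ▸ measureReal_mono hUA, fun hθ => le_antisymm ?_ (hPU ▸ measureReal_mono hUA)⟩
  exact hPU ▸ ENNReal.toReal_mono (measure_ne_top _ _) (measure_mono_ae (hAU hθ))

/-- the coverage probability with `n`-layer SIC capability is at least
`Σ_{k=1}^n (1−η)^{k−1} η p_k`, with equality when `θ ≥ 1`. -/
theorem sic_hcn_coverage_finite
    {Ω : Type*} [MeasureSpace Ω] [IsProbabilityMeasure (ℙ : Measure Ω)]
    (β θ η : ℝ) (hβ : β ∈ Set.Ioo (0:ℝ) 1) (hθ : 0 < θ) (hη : η ∈ Set.Ioc (0:ℝ) 1)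
    (E : ℕ → Ω → ℝ) (hEmeas : ∀ i, Measurable (E i))
    -- Bernoulli marks: t k = 1 iff the k-th strongest BS is accessible
    (t : ℕ → Ω → ℝ) (htmeas : ∀ k, Measurable (t k))
    (ht01 : ∀ k ω, t k ω = 0 ∨ t k ω = 1)
    (htdist : ∀ k, ℙ {ω | t k ω = 1} = ENNReal.ofReal η)
    -- the E's and t's are jointly independent
    (hindep : iIndepFun (Sum.elim E t) ℙ)
    (hEdist : ∀ i, ∀ x : ℝ, 0 ≤ x → ℙ {ω | x < E i ω} = ENNReal.ofReal (Real.exp (-x)))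
    (ξ : ℕ → Ω → ℝ)
    (hξ : ∀ k ω, ξ k ω = (∑ i ∈ Finset.range k, E i ω) ^ (1/β : ℝ))
    (I : ℕ → Ω → ℝ) (hI : ∀ k ω, I k ω = ∑' j : ℕ, (ξ (k + 1 + j) ω)⁻¹)
    -- I_l^{!k} = Σ_{j ≥ l+1, j ≠ k} ξ_j⁻¹
    (J : ℕ → ℕ → Ω → ℝ)
    (hJ : ∀ l k ω, J l k ω = ∑' j : {j : ℕ // l + 1 ≤ j ∧ j ≠ k}, (ξ j ω)⁻¹)
    (p : ℕ → ℝ)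
    (hp : ∀ k, p k = (ℙ {ω | ∀ i, 1 ≤ i → i ≤ k → θ * I i ω < (ξ i ω)⁻¹}).toReal)
    (n : ℕ) (hn : 1 ≤ n) :
    ∑ k ∈ Finset.range n, (1 - η) ^ (k : ℕ) * η * p (k + 1)
      ≤ (ℙ {ω | ∃ l k : ℕ, l ≤ n - 1 ∧ 1 ≤ k ∧ t k ω = 1
          ∧ (∀ i, 1 ≤ i → i ≤ l → θ * I i ω < (ξ i ω)⁻¹)
          ∧ θ * J l k ω < (ξ k ω)⁻¹}).toReal
    ∧ (1 ≤ θ →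
      (ℙ {ω | ∃ l k : ℕ, l ≤ n - 1 ∧ 1 ≤ k ∧ t k ω = 1
          ∧ (∀ i, 1 ≤ i → i ≤ l → θ * I i ω < (ξ i ω)⁻¹)
          ∧ θ * J l k ω < (ξ k ω)⁻¹}).toReal
        = ∑ k ∈ Finset.range n, (1 - η) ^ (k : ℕ) * η * p (k + 1)) :=
  sic_hcn_coverage_finite_general β θ η hβ hη E hEmeas t htmeas ht01 htdist hindep hEdist ξ hξ I hI
    J hJ p hp n hn
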